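/- arXiv:1201.5408 — 4 statements merged into one kernel-verified Lean document; each statement's English description precedes it below -/
import Mathlib

section
/- Let E be an elliptic curve over a local field K_v of residue characteristic not 2, with good reduction, and let F/K_v be a ramified quadratic extension. Then the quadratic twist E^F of E by F has no K_v-rational point of order 4. -/
open WeierstrassCurve

/-- The quadratic twist by `d` of a Weierstrass curve `y² = x³ + a₂x² + a₄x + a₆`
(a model with `a₁ = a₃ = 0`, which exists in residue characteristic `≠ 2`):
`y² = x³ + d·a₂x² + d²·a₄x + d³·a₆`.  This is the quadratic twist of `E` by `K(√d)/K`. -/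
def WeierstrassCurve.quadTwist {K : Type*} [CommRing K] (W : WeierstrassCurve K) (d : K) :
    WeierstrassCurve K :=
  ⟨0, d * W.a₂, 0, d ^ 2 * W.a₄, d ^ 3 * W.a₆⟩

/-- `E/K` has good reduction with respect to the discrete valuation ring `R ⊆ K`: after a
change of variables over `K`, `E` comes from a Weierstrass model over `R` with unit
discriminant. -/
def HasGoodReduction (R : Type*) {K : Type*} [CommRing R] [IsDomain R]
    [IsDiscreteValuationRing R] [Field K] [Algebra R K] (E : WeierstrassCurve K) : Prop :=
  ∃ (W : WeierstrassCurve R) (C : VariableChange K),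
    IsUnit W.Δ ∧ C • W.map (algebraMap R K) = E

/-- `d ∈ K` has odd valuation with respect to the discrete valuation ring `R ⊆ K`, i.e.
`d` is a square times a uniformizer times a unit; equivalently `K(√d)/K` is a ramified
quadratic extension (when `d` is a nonsquare and the residue characteristic is odd). -/
def HasOddVal (R : Type*) {K : Type*} [CommRing R] [IsDomain R]
    [IsDiscreteValuationRing R] [Field K] [Algebra R K] (d : K) : Prop :=
  ∃ (c : K) (π : R) (u : Rˣ), c ≠ 0 ∧ Irreducible π ∧ d = c ^ 2 * algebraMap R K (π * u)

/-!
If `P` has order 4 on the twist `y² = x³ + d a₂ x² + d² a₄ x + d³ a₆`, then `2P = (d x₀, 0)` is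
2-torsion, and the tangent line at `P` shows that `ρ = (x(P) - d x₀) / d` satisfies
`ρ² = f'(x₀)` for `f = x³ + a₂x² + a₄x + a₆` while `d (2ρ + 3x₀ + a₂)` is a square.
Transporting `x₀`, `ρ` to a model of `E` over `R` with `a₁ = a₃ = 0` and unit discriminant makes
them integral, and `Δ = 16 ρ⁴ (2ρ + 3x₀ + a₂)(3x₀ + a₂ - 2ρ)` then forces `2ρ + 3x₀ + a₂` to be
a unit. So `d` would be a square times a unit of `R`, which its odd valuation forbids.
-/

namespace WeierstrassCurve

instance isCharNeTwoNF_quadTwist {K : Type*} [CommRing K] (W : WeierstrassCurve K) (d : K) :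
    (W.quadTwist d).IsCharNeTwoNF :=
  ⟨rfl, rfl⟩

instance isCharNeTwoNF_map {R S : Type*} [CommRing R] [CommRing S] (W : WeierstrassCurve R)
    [W.IsCharNeTwoNF] (φ : R →+* S) : (W.map φ).IsCharNeTwoNF :=
  ⟨by simp, by simp⟩

/-- What a halving of a 2-torsion point on the twist `y² = f_d(x)` by `d` imposes on
`f(x) = x³ + a₂x² + a₄x + a₆`: if `2P = (d x₀, 0)`, then `ρ = (x(P) - d x₀) / d` satisfies
`ρ² = f'(x₀)` and `y(P)² = d³ ρ² (2ρ + 3x₀ + a₂)`. -/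
def TwistHalvingCondition {R : Type*} [CommRing R] (W : WeierstrassCurve R) (d : R) : Prop :=
  ∃ x₀ ρ : R, x₀ ^ 3 + W.a₂ * x₀ ^ 2 + W.a₄ * x₀ + W.a₆ = 0 ∧
    ρ ^ 2 = 3 * x₀ ^ 2 + 2 * W.a₂ * x₀ + W.a₄ ∧ IsSquare (d * (2 * ρ + 3 * x₀ + W.a₂))

theorem Δ_eq_of_root {R : Type*} [CommRing R] (W : WeierstrassCurve R) [W.IsCharNeTwoNF]
    {x₀ ρ : R} (hroot : x₀ ^ 3 + W.a₂ * x₀ ^ 2 + W.a₄ * x₀ + W.a₆ = 0)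
    (hρ : ρ ^ 2 = 3 * x₀ ^ 2 + 2 * W.a₂ * x₀ + W.a₄) :
    W.Δ = 16 * ρ ^ 4 * ((2 * ρ + 3 * x₀ + W.a₂) * (3 * x₀ + W.a₂ - 2 * ρ)) := by
  have h₆ : W.a₆ = -(x₀ ^ 3 + W.a₂ * x₀ ^ 2 + W.a₄ * x₀) := by linear_combination hroot
  rw [Δ_of_isCharNeTwoNF, h₆]
  linear_combination (-16 * ((3 * x₀ ^ 2 + 2 * W.a₂ * x₀ + W.a₄ + ρ ^ 2) *
    ((3 * x₀ + W.a₂) ^ 2 - 4 * (3 * x₀ ^ 2 + 2 * W.a₂ * x₀ + W.a₄)) - 4 * ρ ^ 4)) * hρ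

section Field

variable {K : Type*} [Field K]

theorem twistHalvingCondition_one_of_double {W : WeierstrassCurve K} {x y ℓ x₀ : K} (hy : y ≠ 0)
    (hxy : y ^ 2 = x ^ 3 + W.a₂ * x ^ 2 + W.a₄ * x + W.a₆)
    (hℓ : ℓ * (2 * y) = 3 * x ^ 2 + 2 * W.a₂ * x + W.a₄) (hx₀ : x₀ = ℓ ^ 2 - W.a₂ - 2 * x)
    (hroot : x₀ ^ 3 + W.a₂ * x₀ ^ 2 + W.a₄ * x₀ + W.a₆ = 0) :
    W.TwistHalvingCondition 1 := by
  -- The tangent at `P` meets the curve again at `(x₀, 0)`, so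
  -- `f(X) - (y + ℓ (X - x))² = (X - x)² (X - x₀)`; differentiating at `x₀` gives
  -- `f'(x₀) = (x - x₀)²`.
  have hρ : (x - x₀) ^ 2 = 3 * x₀ ^ 2 + 2 * W.a₂ * x₀ + W.a₄ := by
    have h0 : ((x - x₀) ^ 2 - (3 * x₀ ^ 2 + 2 * W.a₂ * x₀ + W.a₄)) ^ 2 = 0 := by
      linear_combination (-(2 * ℓ * y + (3 * x ^ 2 + 2 * W.a₂ * x + W.a₄))) * hℓ
        + (-4 * y ^ 2) * hx₀ + (4 * (x₀ + W.a₂ + 2 * x)) * hxy + (4 * (2 * x + x₀ + W.a₂)) * hroot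
    exact sub_eq_zero.mp (pow_eq_zero_iff two_ne_zero |>.mp h0)
  have hy2 : y ^ 2 = (x - x₀) ^ 2 * (2 * (x - x₀) + 3 * x₀ + W.a₂) := by
    linear_combination hxy + hroot - (x - x₀) * hρ
  have hxx₀ : x - x₀ ≠ 0 := by
    rintro h
    rw [h] at hy2
    exact hy (pow_eq_zero_iff two_ne_zero |>.mp (by simpa using hy2))
  refine ⟨x₀, x - x₀, hroot, hρ, y / (x - x₀), ?_⟩
  field_simp
  linear_combination -hy2

theorem Affine.Point.Y_eq_negY_of_add_self_eq_zero [DecidableEq K] {W : WeierstrassCurve K}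
    {x y : K} {h : W.toAffine.Nonsingular x y} (hP : Affine.Point.some x y h + .some x y h = 0) :
    y = W.toAffine.negY x y := by
  by_contra hy
  rw [Affine.Point.add_self_of_Y_ne hy] at hP
  exact Affine.Point.some_ne_zero _ hP

section IsCharNeTwoNF

variable {W : WeierstrassCurve K} [W.IsCharNeTwoNF]

theorem Affine.negY_of_isCharNeTwoNF (x y : K) : W.toAffine.negY x y = -y := by
  simp [Affine.negY]

theorem twistHalvingCondition_one_of_addOrderOf_eq_four [DecidableEq K] (h2 : (2 : K) ≠ 0)
    {P : W.toAffine.Point} (hP : addOrderOf P = 4) : W.TwistHalvingCondition 1 := by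
  have h2P : P + P ≠ 0 := by
    intro h
    have := addOrderOf_dvd_of_nsmul_eq_zero (by rwa [two_nsmul] : 2 • P = 0)
    rw [hP] at this
    norm_num at this
  have h4P : (P + P) + (P + P) = 0 := by
    simpa [← two_nsmul, ← mul_nsmul', hP] using addOrderOf_nsmul_eq_zero P
  rcases P with _ | @⟨x, y, h⟩
  · exact (h2P (zero_add _)).elim
  have hy : y ≠ W.toAffine.negY x y := fun hy => h2P (Affine.Point.add_self_of_Y_eq hy)
  have h₂ := Affine.nonsingular_add h h fun hxy => hy hxy.2
  rw [Affine.Point.add_self_of_Y_ne hy] at h4P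
  have hy₂ := Affine.Point.Y_eq_negY_of_add_self_eq_zero h4P
  rw [Affine.negY_of_isCharNeTwoNF] at hy₂
  have hy₂0 : W.toAffine.addY x x y (W.toAffine.slope x x y y) = 0 :=
    (mul_eq_zero.mp (by linear_combination hy₂ : (2 : K) * _ = 0)).resolve_left h2
  have hy0 : y ≠ 0 := fun h0 => hy (by rw [h0, Affine.negY_of_isCharNeTwoNF, neg_zero])
  have h₁ : W.toAffine.a₁ = 0 := W.a₁_of_isCharNeTwoNF
  have h₃ : W.toAffine.a₃ = 0 := W.a₃_of_isCharNeTwoNF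
  have hxy := (W.toAffine.equation_iff x y).mp h.1
  have hroot := (W.toAffine.equation_iff _ _).mp h₂.1
  rw [h₁, h₃] at hxy hroot
  rw [hy₂0] at hroot
  refine twistHalvingCondition_one_of_double (x := x) (ℓ := W.toAffine.slope x x y y)
    (x₀ := W.toAffine.addX x x (W.toAffine.slope x x y y)) hy0 (by linear_combination hxy) ?_
    (by simp only [Affine.addX, h₁]; ring) (by linear_combination -hroot)
  rw [Affine.slope_of_Y_ne rfl hy, Affine.negY_of_isCharNeTwoNF, h₁, div_mul_eq_mul_div,
    div_eq_iff (by rw [sub_neg_eq_add, ← two_mul]; exact mul_ne_zero h2 hy0)]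
  ring

end IsCharNeTwoNF

theorem VariableChange.s_eq_zero_of_isCharNeTwoNF (h2 : (2 : K) ≠ 0) {W : WeierstrassCurve K}
    [W.IsCharNeTwoNF] {C : VariableChange K} [(C • W).IsCharNeTwoNF] : C.s = 0 := by
  have h := (C • W).a₁_of_isCharNeTwoNF
  rw [variableChange_a₁, W.a₁_of_isCharNeTwoNF] at h
  simpa [h2] using h

theorem VariableChange.t_eq_zero_of_isCharNeTwoNF (h2 : (2 : K) ≠ 0) {W : WeierstrassCurve K}
    [W.IsCharNeTwoNF] {C : VariableChange K} [(C • W).IsCharNeTwoNF] : C.t = 0 := by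
  have h := (C • W).a₃_of_isCharNeTwoNF
  rw [variableChange_a₃, W.a₁_of_isCharNeTwoNF, W.a₃_of_isCharNeTwoNF] at h
  simpa [h2] using h

theorem TwistHalvingCondition.of_quadTwist {W : WeierstrassCurve K} {d : K} (hd : d ≠ 0)
    (h : (W.quadTwist d).TwistHalvingCondition 1) : W.TwistHalvingCondition d := by
  obtain ⟨x₀, ρ, hroot, hρ, hsq⟩ := h
  simp only [quadTwist, one_mul] at hroot hρ hsq
  refine ⟨x₀ / d, ρ / d, ?_, ?_, ?_⟩
  · field_simp
    linear_combination hroot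
  · field_simp
    linear_combination hρ
  · convert hsq using 1
    field_simp

theorem TwistHalvingCondition.of_variableChange {W : WeierstrassCurve K} {d : K}
    {C : VariableChange K} (hs : C.s = 0) (ht : C.t = 0)
    (h : (C • W).TwistHalvingCondition d) : W.TwistHalvingCondition d := by
  obtain ⟨x₀, ρ, hroot, hρ, hsq⟩ := h
  simp only [variableChange_a₂, variableChange_a₄, variableChange_a₆, hs, ht,
    Units.val_inv_eq_inv_val] at hroot hρ hsq
  have hu : (C.u : K) ≠ 0 := C.u.ne_zero
  refine ⟨C.u ^ 2 * x₀ + C.r, C.u ^ 2 * ρ, ?_, ?_, ?_⟩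
  · field_simp at hroot
    linear_combination hroot
  · field_simp at hρ
    linear_combination hρ
  · obtain ⟨e, he⟩ := hsq
    refine ⟨C.u * e, ?_⟩
    field_simp at he
    linear_combination he

end Field

end WeierstrassCurve

section Integral

variable {R K : Type*} [CommRing R] [IsIntegrallyClosed R] [Field K] [Algebra R K]
  [IsFractionRing R K]

theorem IsIntegrallyClosed.exists_algebraMap_eq_of_sq_eq {z : K} {m : R}
    (h : z ^ 2 = algebraMap R K m) : ∃ w : R, algebraMap R K w = z := by
  refine IsIntegrallyClosed.isIntegral_iff.mp
    ⟨Polynomial.X ^ 2 - Polynomial.C m, Polynomial.monic_X_pow_sub_C m two_ne_zero, ?_⟩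
  simp [h]

theorem IsIntegrallyClosed.exists_algebraMap_eq_of_cubic {z : K} {a b c : R}
    (h : z ^ 3 + algebraMap R K a * z ^ 2 + algebraMap R K b * z + algebraMap R K c = 0) :
    ∃ w : R, algebraMap R K w = z := by
  refine IsIntegrallyClosed.isIntegral_iff.mp
    ⟨Polynomial.X ^ 3 + Polynomial.C a * Polynomial.X ^ 2 + Polynomial.C b * Polynomial.X
      + Polynomial.C c, by monicity!, ?_⟩
  simpa using h

theorem IsIntegrallyClosed.isSquare_of_isSquare_algebraMap {r : R}
    (h : IsSquare (algebraMap R K r)) : IsSquare r := by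
  obtain ⟨z, hz⟩ := h
  obtain ⟨w, rfl⟩ := exists_algebraMap_eq_of_sq_eq (K := K) (m := r) (by rw [hz, sq])
  exact ⟨w, IsFractionRing.injective R K (by simpa using hz)⟩

end Integral

section GoodReduction

variable {R K : Type*} [CommRing R] [IsDomain R] [IsDiscreteValuationRing R] [Field K]
  [Algebra R K]

theorem HasGoodReduction.exists_isCharNeTwoNF {E : WeierstrassCurve K} (h2 : IsUnit (2 : R))
    (h : HasGoodReduction R E) : ∃ (W : WeierstrassCurve R) (C : VariableChange K),
      W.IsCharNeTwoNF ∧ IsUnit W.Δ ∧ C • W.map (algebraMap R K) = E := by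
  obtain ⟨W, C, hΔ, rfl⟩ := h
  let := h2.invertible
  refine ⟨W.toCharNeTwoNF • W, C * (W.toCharNeTwoNF.map (algebraMap R K))⁻¹, inferInstance,
    ?_, ?_⟩
  · rw [variableChange_Δ]
    exact (W.toCharNeTwoNF.u⁻¹.isUnit.pow 12).mul hΔ
  · rw [← map_variableChange, mul_smul, inv_smul_smul]

variable [IsFractionRing R K]

theorem HasOddVal.ne_zero {d : K} (hd : HasOddVal R d) : d ≠ 0 := by
  obtain ⟨c, π, u, hc, hπ, rfl⟩ := hd
  exact mul_ne_zero (pow_ne_zero 2 hc) ((map_ne_zero_iff _ (IsFractionRing.injective R K)).mpr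
    (mul_ne_zero hπ.ne_zero u.ne_zero))

theorem HasOddVal.not_isSquare_mul_algebraMap {d : K} (hd : HasOddVal R d) {α : R}
    (hα : IsUnit α) : ¬IsSquare (d * algebraMap R K α) := by
  rintro ⟨e, he⟩
  obtain ⟨c, π, u, hc, hπ, rfl⟩ := hd
  have hsq : IsSquare (algebraMap R K (π * (u * α))) := ⟨e / c, by
    rw [← mul_assoc, map_mul]
    field_simp
    linear_combination he⟩
  exact ((irreducible_mul_isUnit (u.isUnit.mul hα)).mpr hπ).not_isSquare
    (IsIntegrallyClosed.isSquare_of_isSquare_algebraMap hsq)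

theorem WeierstrassCurve.not_twistHalvingCondition_map {W : WeierstrassCurve R} [W.IsCharNeTwoNF]
    (hΔ : IsUnit W.Δ) {d : K} (hd : HasOddVal R d) :
    ¬(W.map (algebraMap R K)).TwistHalvingCondition d := by
  rintro ⟨x₀, ρ, hroot, hρ, hsq⟩
  simp only [map_a₂, map_a₄, map_a₆] at hroot hρ hsq
  obtain ⟨τ, rfl⟩ := IsIntegrallyClosed.exists_algebraMap_eq_of_cubic hroot
  obtain ⟨σ, rfl⟩ := IsIntegrallyClosed.exists_algebraMap_eq_of_sq_eq
    (z := ρ) (m := 3 * τ ^ 2 + 2 * W.a₂ * τ + W.a₄)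
    (by simp only [hρ, map_add, map_mul, map_pow, map_ofNat])
  have hτ : τ ^ 3 + W.a₂ * τ ^ 2 + W.a₄ * τ + W.a₆ = 0 :=
    IsFractionRing.injective R K (by simpa using hroot)
  have hσ : σ ^ 2 = 3 * τ ^ 2 + 2 * W.a₂ * τ + W.a₄ :=
    IsFractionRing.injective R K (by simp only [hρ, map_add, map_mul, map_pow, map_ofNat])
  have hα : IsUnit (2 * σ + 3 * τ + W.a₂) := by
    rw [W.Δ_eq_of_root hτ hσ] at hΔ
    exact isUnit_of_mul_isUnit_left (isUnit_of_mul_isUnit_right hΔ)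
  exact hd.not_isSquare_mul_algebraMap hα (by simpa only [map_add, map_mul, map_ofNat] using hsq)

end GoodReduction

open Classical in
theorem stmt0_general (R : Type*) [CommRing R] [IsDomain R] [IsDiscreteValuationRing R]
    (Kv : Type*) [Field Kv] [Algebra R Kv] [IsFractionRing R Kv]
    (h2 : IsUnit (2 : R))
    (E : WeierstrassCurve Kv) (ha₁ : E.a₁ = 0) (ha₃ : E.a₃ = 0)
    (hgood : _root_.HasGoodReduction R E)
    (d : Kv) (hram : HasOddVal R d) :
    ∀ P : (E.quadTwist d).toAffine.Point, addOrderOf P ≠ 4 := by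
  intro P hP
  have h2K : (2 : Kv) ≠ 0 := by simpa only [map_ofNat] using (h2.map (algebraMap R Kv)).ne_zero
  obtain ⟨W, C, _, hΔ, rfl⟩ := hgood.exists_isCharNeTwoNF h2
  have : (C • W.map (algebraMap R Kv)).IsCharNeTwoNF := ⟨ha₁, ha₃⟩
  have hhalf := (twistHalvingCondition_one_of_addOrderOf_eq_four h2K hP).of_quadTwist hram.ne_zero
  exact W.not_twistHalvingCondition_map hΔ hram <| hhalf.of_variableChange
    (C.s_eq_zero_of_isCharNeTwoNF (W := W.map (algebraMap R Kv)) h2K)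
    (C.t_eq_zero_of_isCharNeTwoNF (W := W.map (algebraMap R Kv)) h2K)

open Classical in
/-- Let `E` be an elliptic curve over a nonarchimedean local field `K_v`
(the fraction field of a complete DVR `R`; completeness is not needed for the statement) of
residue characteristic `≠ 2` (i.e. `2 ∈ Rˣ`), with good reduction, and let `F = K_v(√d)` be a
ramified quadratic extension (`d` a nonsquare of odd valuation). Then the quadratic twist
`E^F` of `E` by `F` has no `K_v`-rational point of order 4. -/
theorem stmt0 (R : Type*) [CommRing R] [IsDomain R] [IsDiscreteValuationRing R]
    (Kv : Type*) [Field Kv] [Algebra R Kv] [IsFractionRing R Kv]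
    (h2 : IsUnit (2 : R))
    (E : WeierstrassCurve Kv) (hell : E.Δ ≠ 0) (ha₁ : E.a₁ = 0) (ha₃ : E.a₃ = 0)
    (hgood : _root_.HasGoodReduction R E)
    (d : Kv) (hd : ¬IsSquare d) (hram : HasOddVal R d) :
    ∀ P : (E.quadTwist d).toAffine.Point, addOrderOf P ≠ 4 :=
  stmt0_general R Kv h2 E ha₁ ha₃ hgood d hram
end

section
/- Let E be an elliptic curve over a field K of characteristic 0 with E(K)[2] ≅ Z/2Z, generated by a point P, and let φ: E → E' be the 2-isogeny with kernel C = ⟨P⟩. Then E admits a cyclic subgroup of order 4 stable under Gal(K̄/K) if and only if all points of E'[2] are K-rational, i.e. K(E'[2]) = K. -/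
/-!
Both sides are equivalent to `B` being a square in `K`. The nonzero 2-torsion points of `E'` have
`x`-coordinates `0` and `A ± 2√B`, so they are rational exactly when `√B ∈ K`.

If `⟨Q⟩` is a Galois-stable cyclic subgroup of order 4, every `σ` sends `Q` to `±Q`, so `x(Q)` is
rational, and `2Q` is a rational point of order 2, hence `(0, 0)` because `E(K)[2]` has only two
elements. The duplication formula `x(2Q) = (x(Q)² - B)² / 4y(Q)²` then gives `x(Q)² = B`.
Conversely, if `B = b²` with the sign chosen so that `A + 2b ≠ 0`, the point
`Q = (b, b√(A + 2b))` satisfies `2Q = (0, 0)`, and `σQ = ±Q` because `σ` fixes `x(Q) = b`.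
-/

open WeierstrassCurve WeierstrassCurve.Affine

lemma eq_or_eq_neg_of_mem_zmultiples_of_addOrderOf_eq_four {G : Type*} [AddGroup G] {P Q : G}
    (hP : addOrderOf P = 4) (hQ : Q ∈ AddSubgroup.zmultiples P) (hQ4 : addOrderOf Q = 4) :
    Q = P ∨ Q = -P := by
  obtain ⟨n, rfl⟩ := AddSubgroup.mem_zmultiples_iff.mp hQ
  have h4P : (4 : ℤ) • P = 0 := by
    simpa [hP] using (natCast_zsmul P (addOrderOf P)).trans (addOrderOf_nsmul_eq_zero P)
  rw [← mod_addOrderOf_zsmul, hP] at hQ4 ⊢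
  have := Int.emod_nonneg n (by norm_num : (4 : ℤ) ≠ 0)
  have := Int.emod_lt_of_pos n (by norm_num : (0 : ℤ) < 4)
  interval_cases n % 4
  · simp at hQ4
  · simp
  · have : addOrderOf ((2 : ℤ) • P) ∣ 2 := addOrderOf_dvd_of_nsmul_eq_zero <| by
      rw [← natCast_zsmul, smul_smul]; exact h4P
    rw [hQ4] at this
    norm_num at this
  · exact .inr (eq_neg_of_add_eq_zero_left (by rw [← add_one_zsmul]; exact h4P))

lemma exists_sq_eq_and_add_two_mul_ne_zero {F : Type*} [Field F] [NeZero (2 : F)] {A B : F}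
    (hB : IsSquare B) (hB0 : B ≠ 0) : ∃ b, b ^ 2 = B ∧ A + 2 * b ≠ 0 := by
  obtain ⟨c, rfl⟩ := hB
  by_cases hc : A + 2 * c = 0
  · refine ⟨-c, by ring, fun hc' => hB0 ?_⟩
    have : (2 : F) * (2 * c) = 0 := by linear_combination hc - hc'
    rw [mul_eq_zero_iff_left two_ne_zero, mul_eq_zero_iff_left two_ne_zero] at this
    rw [this, mul_zero]
  · exact ⟨c, by ring, hc⟩

instance WeierstrassCurve.isElliptic_baseChange {R A : Type*} [CommRing R] [CommRing A]
    [Algebra R A] (W : WeierstrassCurve R) [W.IsElliptic] : (W.baseChange A).IsElliptic :=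
  inferInstanceAs (W.map (algebraMap R A)).IsElliptic

namespace WeierstrassCurve.Affine

variable {F : Type*} [Field F] {W : Affine F} {a b x y : F}

lemma equation_iff_of_eq (hW : W = ⟨0, a, 0, b, 0⟩) :
    W.Equation x y ↔ y ^ 2 = x ^ 3 + a * x ^ 2 + b * x := by
  subst hW
  rw [equation_iff]
  ring_nf

lemma negY_of_eq (hW : W = ⟨0, a, 0, b, 0⟩) : W.negY x y = -y := by
  subst hW
  simp [negY]

lemma Δ_of_eq (hW : W = ⟨0, a, 0, b, 0⟩) : W.Δ = 16 * b ^ 2 * (a ^ 2 - 4 * b) := by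
  subst hW
  simp only [Δ, b₂, b₄, b₆, b₈]
  ring

lemma Δ_ne_zero_of_isogenous {W' : Affine F} (hW : W = ⟨0, a, 0, b, 0⟩)
    (hW' : W' = ⟨0, -2 * a, 0, a ^ 2 - 4 * b, 0⟩) (hΔ : W.Δ ≠ 0) : W'.Δ ≠ 0 := by
  rw [Δ_of_eq hW, mul_ne_zero_iff, mul_ne_zero_iff, pow_ne_zero_iff two_ne_zero] at hΔ
  obtain ⟨⟨h16, hb⟩, hd⟩ := hΔ
  rw [Δ_of_eq hW', show (-2 * a) ^ 2 - 4 * (a ^ 2 - 4 * b) = 16 * b by ring]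
  exact mul_ne_zero (mul_ne_zero h16 (pow_ne_zero 2 hd)) (mul_ne_zero h16 hb)

lemma baseChange_of_eq {K : Type*} [Field K] [Algebra K F] {W : Affine K} {a b : K}
    (hW : W = ⟨0, a, 0, b, 0⟩) : W⁄F = ⟨0, algebraMap K F a, 0, algebraMap K F b, 0⟩ := by
  subst hW
  ext <;> simp

lemma ne_negY_of_eq [NeZero (2 : F)] (hW : W = ⟨0, a, 0, b, 0⟩) (hy : y ≠ 0) : y ≠ W.negY x y := by
  rw [negY_of_eq hW]
  intro h
  exact hy ((mul_eq_zero.mp (by linear_combination h : (2 : F) * y = 0)).resolve_left two_ne_zero)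

section Group

variable [DecidableEq F]

lemma eq_zero_of_natCard_twoTorsion_eq_two [W.IsElliptic] (hW : W = ⟨0, a, 0, b, 0⟩)
    (hcard : Nat.card {P : W.Point // 2 • P = 0} = 2) {u : F}
    (hu : u ^ 3 + a * u ^ 2 + b * u = 0) : u = 0 := by
  by_contra hu0
  have h₀ : W.Nonsingular 0 0 :=
    equation_iff_nonsingular.mp ((equation_iff_of_eq hW).mpr (by ring))
  have hu : W.Nonsingular u 0 :=
    equation_iff_nonsingular.mp ((equation_iff_of_eq hW).mpr (by linear_combination -hu))
  have hsub : {0, Point.some 0 0 h₀, Point.some u 0 hu} ⊆ {P : W.Point | 2 • P = 0} := by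
    rintro P (rfl | rfl | rfl)
    · exact nsmul_zero 2
    all_goals exact (two_nsmul _).trans (Point.add_self_of_Y_eq (by rw [negY_of_eq hW, neg_zero]))
  have hcard' : {P : W.Point | 2 • P = 0}.ncard = 2 := by rw [← Nat.card_coe_set_eq]; exact hcard
  have h3 : ({0, Point.some 0 0 h₀, Point.some u 0 hu} : Set W.Point).ncard = 3 :=
    Set.ncard_eq_three.mpr ⟨_, _, _, (Point.some_ne_zero h₀).symm, (Point.some_ne_zero hu).symm,
      fun h => hu0 (Point.some.inj h).1.symm, rfl⟩
  have := Set.ncard_le_ncard hsub (Set.finite_of_ncard_ne_zero (by rw [hcard']; simp))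
  omega

variable [NeZero (2 : F)]

lemma addX_slope_self_mul (hW : W = ⟨0, a, 0, b, 0⟩) (h : W.Equation x y) (hy : y ≠ 0) :
    W.addX x x (W.slope x x y y) * (2 * y) ^ 2 = (x ^ 2 - b) ^ 2 := by
  have hslope : W.slope x x y y * (2 * y) = 3 * x ^ 2 + 2 * a * x + b := by
    rw [slope_of_Y_ne rfl (ne_negY_of_eq hW hy), negY_of_eq hW, div_mul_eq_mul_div,
      div_eq_iff (by rwa [sub_neg_eq_add, ← two_mul, mul_ne_zero_iff, and_iff_right two_ne_zero]),
      hW]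
    ring
  rw [equation_iff_of_eq hW] at h
  generalize W.slope x x y y = ℓ at hslope ⊢
  subst hW
  rw [addX]
  linear_combination (ℓ * (2 * y) + 3 * x ^ 2 + 2 * a * x + b) * hslope - 4 * (a + 2 * x) * h

lemma two_nsmul_some_eq_zero_iff (hW : W = ⟨0, a, 0, b, 0⟩) (h : W.Nonsingular x y) :
    2 • Point.some x y h = 0 ↔ y = 0 := by
  rw [two_nsmul]
  refine ⟨fun h2 => ?_, fun hy => Point.add_self_of_Y_eq (by rw [negY_of_eq hW, hy, neg_zero])⟩
  by_contra hy
  rw [Point.add_self_of_Y_ne (ne_negY_of_eq hW hy)] at h2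
  exact Point.some_ne_zero _ h2

lemma X_eq_zero_iff_of_two_nsmul_some_eq (hW : W = ⟨0, a, 0, b, 0⟩) (h : W.Nonsingular x y)
    (hy : y ≠ 0) {u v : F} {h₂ : W.Nonsingular u v} (h2 : 2 • Point.some x y h = Point.some u v h₂) :
    u = 0 ↔ x ^ 2 = b := by
  rw [two_nsmul, Point.add_self_of_Y_ne (ne_negY_of_eq hW hy), Point.some.injEq] at h2
  have hX := addX_slope_self_mul hW h.1 hy
  rw [h2.1] at hX
  have h2y : (2 * y) ^ 2 ≠ 0 := pow_ne_zero _ (mul_ne_zero two_ne_zero hy)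
  constructor
  · rintro rfl
    rwa [zero_mul, eq_comm, pow_eq_zero_iff two_ne_zero, sub_eq_zero] at hX
  · intro hx
    rw [hx, sub_self, zero_pow two_ne_zero, mul_eq_zero] at hX
    exact hX.resolve_right h2y

lemma addOrderOf_some_eq_four (hW : W = ⟨0, a, 0, b, 0⟩) (h : W.Nonsingular x y) (hy : y ≠ 0)
    (hx : x ^ 2 = b) : addOrderOf (Point.some x y h) = 4 := by
  obtain ⟨T, hT⟩ : ∃ T, 2 • Point.some x y h = T := ⟨_, rfl⟩
  rcases T with _ | ⟨u, v, h₂⟩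
  · exact absurd ((two_nsmul_some_eq_zero_iff hW h).mp hT) hy
  have hu := (X_eq_zero_iff_of_two_nsmul_some_eq hW h hy hT).mpr hx
  have hv : v = 0 := by
    have := (equation_iff_of_eq hW).mp h₂.1
    rw [hu] at this
    exact pow_eq_zero_iff two_ne_zero |>.mp (by linear_combination this)
  refine addOrderOf_eq_prime_pow (p := 2) (n := 1) ?_ ?_
  · rw [pow_one, hT]
    exact Point.some_ne_zero h₂
  · rw [pow_succ, pow_one, mul_nsmul, hT, two_nsmul_some_eq_zero_iff hW, hv]

end Group

lemma Point.map_some_eq_or_eq_neg_iff {K L : Type*} [Field K] [Field L] [Algebra K L]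
    [DecidableEq L] {W : Affine K} (f : L →ₐ[K] L) {x y : L} (h : (W⁄L).Nonsingular x y) :
    Point.map f (Point.some x y h) = Point.some x y h ∨
      Point.map f (Point.some x y h) = -Point.some x y h ↔ f x = x := by
  rw [Point.map_some]
  exact Point.X_eq_iff.symm

end WeierstrassCurve.Affine

section Galois

variable {K L : Type*} [Field K] [Field L] [Algebra K L] [DecidableEq L] {A B : K}

theorem eq_zero_of_two_nsmul_eq_zero_of_mem_range [DecidableEq K] [NeZero (2 : L)]
    {E : WeierstrassCurve K} [E.IsElliptic] (hE : E = ⟨0, A, 0, B, 0⟩)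
    (htors : Nat.card {P : E.toAffine.Point // 2 • P = 0} = 2) {u v : L}
    {h : (E.toAffine⁄L).Nonsingular u v} (h2 : 2 • Point.some u v h = 0)
    (hu : u ∈ Set.range (algebraMap K L)) : u = 0 := by
  have hEL := baseChange_of_eq (F := L) hE
  obtain rfl := (two_nsmul_some_eq_zero_iff hEL h).mp h2
  obtain ⟨u, rfl⟩ := hu
  suffices u = 0 by rw [this, map_zero]
  refine eq_zero_of_natCard_twoTorsion_eq_two hE htors ((algebraMap K L).injective ?_)
  have := (equation_iff_of_eq hEL).mp h.1
  simp only [map_add, map_mul, map_pow, map_zero]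
  linear_combination -this

theorem isSquare_of_stable_addOrderOf_eq_four [DecidableEq K] [IsGalois K L] [NeZero (2 : L)]
    {E : WeierstrassCurve K} [E.IsElliptic] (hE : E = ⟨0, A, 0, B, 0⟩)
    (htors : Nat.card {P : E.toAffine.Point // 2 • P = 0} = 2) {Q : (E.toAffine⁄L).Point}
    (hQ : addOrderOf Q = 4)
    (hstab : ∀ σ : L ≃ₐ[K] L, Point.map σ.toAlgHom Q ∈ AddSubgroup.zmultiples Q) :
    IsSquare B := by
  have hEL := baseChange_of_eq (F := L) hE
  have h4Q : 2 • 2 • Q = 0 := by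
    rw [← mul_nsmul]
    have := addOrderOf_nsmul_eq_zero Q
    rwa [hQ] at this
  have hσQ (σ : L ≃ₐ[K] L) : Point.map σ.toAlgHom Q = Q ∨ Point.map σ.toAlgHom Q = -Q :=
    eq_or_eq_neg_of_mem_zmultiples_of_addOrderOf_eq_four hQ (hstab σ)
      ((addOrderOf_injective _ (Point.map_injective _) Q).trans hQ)
  have hσ2Q (σ : L ≃ₐ[K] L) : Point.map σ.toAlgHom (2 • Q) = 2 • Q := by
    rcases hσQ σ with h | h <;> rw [map_nsmul, h]
    rw [smul_neg, neg_eq_iff_add_eq_zero, ← two_nsmul, h4Q]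
  rcases Q with _ | ⟨x, y, h⟩
  · rw [← Point.zero_def, addOrderOf_zero] at hQ
    norm_num at hQ
  obtain ⟨c, rfl⟩ := (InfiniteGalois.mem_range_algebraMap_iff_fixed x).mpr fun σ =>
    (Point.map_some_eq_or_eq_neg_iff σ.toAlgHom h).mp (hσQ σ)
  obtain ⟨T, hT⟩ : ∃ T, 2 • Point.some _ _ h = T := ⟨_, rfl⟩
  rcases T with _ | ⟨u, v, h₂⟩
  · have := addOrderOf_dvd_of_nsmul_eq_zero hT
    rw [hQ] at this
    norm_num at this
  have hy : y ≠ 0 := fun hy =>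
    Point.some_ne_zero h₂ (hT ▸ (two_nsmul_some_eq_zero_iff hEL h).mpr hy)
  rw [hT] at h4Q hσ2Q
  have hu := eq_zero_of_two_nsmul_eq_zero_of_mem_range hE htors h4Q <|
    (InfiniteGalois.mem_range_algebraMap_iff_fixed u).mpr fun σ =>
      (Point.map_some_eq_or_eq_neg_iff σ.toAlgHom h₂).mp (.inl (hσ2Q σ))
  have hc := (X_eq_zero_iff_of_two_nsmul_some_eq hEL h hy hT).mp hu
  exact ⟨c, (algebraMap K L).injective (by rw [map_mul, ← sq, hc])⟩

theorem map_eq_self_of_two_nsmul_eq_zero_of_isSquare [NeZero (2 : L)] {E' : WeierstrassCurve K}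
    (hE' : E' = ⟨0, -2 * A, 0, A ^ 2 - 4 * B, 0⟩) (hB : IsSquare B) (f : L →ₐ[K] L)
    {Q : (E'.toAffine⁄L).Point} (hQ : 2 • Q = 0) : Point.map f Q = Q := by
  obtain ⟨c, rfl⟩ := hB
  rcases Q with _ | ⟨x, y, h⟩
  · rfl
  have hEL := baseChange_of_eq (F := L) hE'
  obtain rfl := (two_nsmul_some_eq_zero_iff hEL h).mp hQ
  have hx : x ∈ Set.range (algebraMap K L) := by
    have heq := (equation_iff_of_eq hEL).mp h.1
    have : x * ((x - algebraMap K L (A + 2 * c)) * (x - algebraMap K L (A - 2 * c))) = 0 := by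
      simp only [map_add, map_sub, map_mul, map_neg, map_pow, map_ofNat] at heq ⊢
      linear_combination -heq
    rcases mul_eq_zero.mp this with rfl | hx
    · exact ⟨0, map_zero _⟩
    rcases mul_eq_zero.mp hx with hx | hx <;> exact ⟨_, (sub_eq_zero.mp hx).symm⟩
  obtain ⟨r, rfl⟩ := hx
  simp only [Point.map_some, AlgHom.commutes, map_zero]

theorem isSquare_of_forall_map_eq_self [IsAlgClosed L] [IsGalois K L] [NeZero (2 : L)]
    {E' : WeierstrassCurve K} [E'.IsElliptic] (hE' : E' = ⟨0, -2 * A, 0, A ^ 2 - 4 * B, 0⟩)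
    (hfix : ∀ Q : (E'.toAffine⁄L).Point, 2 • Q = 0 →
      ∀ σ : L ≃ₐ[K] L, Point.map σ.toAlgHom Q = Q) :
    IsSquare B := by
  have hEL := baseChange_of_eq (F := L) hE'
  obtain ⟨s, hs⟩ := IsAlgClosed.exists_pow_nat_eq (algebraMap K L B) two_pos
  have h : (E'.toAffine⁄L).Nonsingular (algebraMap K L A + 2 * s) 0 := by
    refine equation_iff_nonsingular.mp ((equation_iff_of_eq hEL).mpr ?_)
    simp only [map_sub, map_mul, map_neg, map_pow, map_ofNat]
    linear_combination (-4 * (algebraMap K L A + 2 * s)) * hs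
  have hfixs (σ : L ≃ₐ[K] L) : σ s = s := by
    have := (Point.map_some_eq_or_eq_neg_iff σ.toAlgHom h).mp
      (.inl (hfix _ ((two_nsmul_some_eq_zero_iff hEL h).mpr rfl) σ))
    rw [map_add, map_mul, map_ofNat, AlgHom.commutes, add_right_inj] at this
    exact mul_left_cancel₀ two_ne_zero this
  obtain ⟨c, rfl⟩ := (InfiniteGalois.mem_range_algebraMap_iff_fixed s).mpr hfixs
  exact ⟨c, (algebraMap K L).injective (by rw [map_mul, ← sq, hs])⟩

theorem exists_stable_addOrderOf_eq_four_of_isSquare [IsAlgClosed L] [NeZero (2 : K)]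
    {E : WeierstrassCurve K} [E.IsElliptic] (hE : E = ⟨0, A, 0, B, 0⟩) (hB : IsSquare B) :
    ∃ Q : (E.toAffine⁄L).Point, addOrderOf Q = 4 ∧
      ∀ σ : L ≃ₐ[K] L, Point.map σ.toAlgHom Q ∈ AddSubgroup.zmultiples Q := by
  have : NeZero (2 : L) := ⟨by
    rw [← map_ofNat (algebraMap K L) 2, map_ne_zero]
    exact two_ne_zero⟩
  have hEL := baseChange_of_eq (F := L) hE
  have hB0 : B ≠ 0 := by
    have := E.isUnit_Δ.ne_zero
    rw [Δ_of_eq hE] at this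
    exact fun hB => this (by rw [hB]; ring)
  obtain ⟨b, hb, hAb⟩ := exists_sq_eq_and_add_two_mul_ne_zero (A := A) hB hB0
  obtain ⟨t, ht⟩ := IsAlgClosed.exists_pow_nat_eq (algebraMap K L (A + 2 * b)) two_pos
  have h : (E.toAffine⁄L).Nonsingular (algebraMap K L b) (algebraMap K L b * t) := by
    refine equation_iff_nonsingular.mp ((equation_iff_of_eq hEL).mpr ?_)
    rw [← hb, mul_pow, ht]
    simp only [map_add, map_mul, map_pow, map_ofNat]
    ring
  have hy : algebraMap K L b * t ≠ 0 := by
    refine mul_ne_zero (fun h0 => hB0 ?_) (fun h0 => hAb ?_)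
    · rw [← hb, (map_eq_zero _).mp h0, zero_pow two_ne_zero]
    · rw [h0, zero_pow two_ne_zero, eq_comm, map_eq_zero] at ht
      exact ht
  refine ⟨_, addOrderOf_some_eq_four hEL h hy (by rw [← map_pow, hb]), fun σ => ?_⟩
  rcases (Point.map_some_eq_or_eq_neg_iff σ.toAlgHom h).mpr (σ.commutes b) with hσ | hσ <;>
    rw [hσ]
  · exact AddSubgroup.mem_zmultiples _
  · exact neg_mem (AddSubgroup.mem_zmultiples _)

end Galois

open Classical in
/-- Let `E` be an elliptic curve over a field `K` of characteristic 0 with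
`E(K)[2] ≅ ℤ/2ℤ`, generated by the point `P = (0,0)` on a model `E : y² = x³ + Ax² + Bx`, and
let `φ : E → E'` be the 2-isogeny with kernel `C = ⟨P⟩`, where
`E' : y² = x³ - 2Ax² + (A² - 4B)x`.  Then `E` admits a cyclic subgroup of order 4 stable under
`Gal(K̄/K)` (a cyclic 4-isogeny defined over `K`) if and only if all points of `E'[2]` are
`K`-rational, i.e. `K(E'[2]) = K` (every 2-torsion point of `E'(K̄)` is Galois-fixed). -/
theorem stmt2 (K : Type*) [Field K] [CharZero K] (A B : K)
    (E E' : WeierstrassCurve K)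
    (hE : E = ⟨0, A, 0, B, 0⟩) (hE' : E' = ⟨0, -2 * A, 0, A ^ 2 - 4 * B, 0⟩)
    (hell : E.Δ ≠ 0)
    -- `E(K)[2] ≅ ℤ/2ℤ`:
    (htors : Nat.card {P : E.toAffine.Point // 2 • P = 0} = 2) :
    (∃ P : (E.toAffine⁄(AlgebraicClosure K)).Point, addOrderOf P = 4 ∧
        ∀ σ : AlgebraicClosure K ≃ₐ[K] AlgebraicClosure K,
          Point.map (W' := E.toAffine) σ.toAlgHom P ∈ AddSubgroup.zmultiples P) ↔
      (∀ Q : (E'.toAffine⁄(AlgebraicClosure K)).Point, 2 • Q = 0 →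
        ∀ σ : AlgebraicClosure K ≃ₐ[K] AlgebraicClosure K, Point.map (W' := E'.toAffine) σ.toAlgHom Q = Q) := by
  have : E.IsElliptic := ⟨hell.isUnit⟩
  have : E'.IsElliptic := ⟨(Δ_ne_zero_of_isogenous hE hE' hell).isUnit⟩
  constructor
  · rintro ⟨P, hP, hstab⟩ Q hQ σ
    exact map_eq_self_of_two_nsmul_eq_zero_of_isSquare hE'
      (isSquare_of_stable_addOrderOf_eq_four hE htors hP hstab) σ.toAlgHom hQ
  · intro hfix
    exact exists_stable_addOrderOf_eq_four_of_isSquare hE (isSquare_of_forall_map_eq_self hE' hfix)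
end

section
/- Let K be a field of characteristic 0, E/K an elliptic curve with E(K)[2] ≅ Z/2Z = C, and let S denote the image of H^1(K, C) in H^1(K, E[2]). Let V ⊆ H^1(K, E[2]) be an r-dimensional F_2-subspace with V ∩ S = 0. Then there exist σ_1, ..., σ_r in the absolute Galois group G_K, each acting nontrivially on E[2], such that the map V → ⊕_{i=1}^r E[2]/C sending the class of a cocycle c to (c(σ_1), ..., c(σ_r)) is well-defined and injective. -/
open WeierstrassCurve WeierstrassCurve.Affine
open scoped Classical

/-- The natural Galois action of `σ ∈ Gal(K̄/K)` on the `K̄`-points of a Weierstrass curve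
defined over `K`. -/
noncomputable def galAct {K : Type*} [Field K] (E : WeierstrassCurve K)
    (σ : AlgebraicClosure K ≃ₐ[K] AlgebraicClosure K) :
    (E⁄(AlgebraicClosure K)).Point →+ (E⁄(AlgebraicClosure K)).Point :=
  Point.map (W' := E) σ.toAlgHom

/-- `P` belongs to `C = E(K)[2]`: it is a Galois-fixed 2-torsion point of `E(K̄)`. -/
noncomputable def MemC {K : Type*} [Field K] (E : WeierstrassCurve K)
    (P : (E⁄(AlgebraicClosure K)).Point) : Prop :=
  2 • P = 0 ∧ ∀ σ : AlgebraicClosure K ≃ₐ[K] AlgebraicClosure K, galAct E σ P = P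

/-!
Over `K̄` the curve is `y² = x (x - α) (x - β)`, so `E[2] = {0, Q, R, Q + R}` with `Q = (α, 0)`,
`R = (β, 0)` and `Q + R = (0, 0)`. As `E(K)[2]` has only two points, `x² + A x + B` has no root in
`K`; hence `α` and `β` are Galois conjugate, every `σ ∈ G_K` fixes or swaps `Q` and `R`, and
`C = {0, Q + R}`. So `G_K` acts trivially on `E[2] / C ≅ 𝔽₂`, which makes `σ ↦ (vⱼ(σ) mod C)ⱼ` a
homomorphism `F : G_K → 𝔽₂ʳ`, and `V ∩ S = 0` says that no nonzero functional `∑_{j ∈ s}` kills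
`F`, i.e. `F` is onto. The elements acting nontrivially on `E[2]` form the complement of a proper
subgroup `H`, and `F g = F (g₀ g) - F g₀` for any `g₀ ∉ H` shows that `F (G_K ∖ H)` still spans
`𝔽₂ʳ`; the `σᵢ` are the elements of `G_K ∖ H` behind a basis of `𝔽₂ʳ` taken from that set.
-/

open Module Submodule Polynomial

section SpanningFamilies

variable {G k V : Type*} [Field k] [AddCommGroup V] [Module k V]

theorem span_eq_top_iff_forall_dual {s : Set V} :
    span k s = ⊤ ↔ ∀ ℓ : Dual k V, ℓ ≠ 0 → ∃ v ∈ s, ℓ v ≠ 0 := by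
  rw [← dualAnnihilator_eq_bot_iff, eq_bot_iff]
  refine forall_congr' fun ℓ => ?_
  have hker : ℓ ∈ (span k s).dualAnnihilator ↔ ∀ v ∈ s, ℓ v = 0 :=
    (mem_dualAnnihilator ℓ).trans (span_le (p := LinearMap.ker ℓ))
  rw [hker, Submodule.mem_bot, ← not_imp_not]
  push Not
  rfl

theorem span_image_compl_eq_span_range [Group G] (F : G → V)
    (hF : ∀ g h, F (g * h) = F g + F h) {H : Subgroup G} (hH : H ≠ ⊤) :
    span k (F '' (H : Set G)ᶜ) = span k (Set.range F) := by
  refine le_antisymm (span_mono (Set.image_subset_range _ _)) (span_le.2 ?_)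
  rintro _ ⟨g, rfl⟩
  obtain ⟨g₀, hg₀⟩ : ∃ g₀, g₀ ∉ H := by simpa [Subgroup.eq_top_iff'] using hH
  by_cases hg : g ∈ H
  · have hg₀g : g₀ * g ∉ H := fun h => hg₀ ((H.mul_mem_cancel_right hg).mp h)
    have hFg : F g = F (g₀ * g) - F g₀ := by rw [hF]; abel
    rw [hFg]
    exact sub_mem (subset_span ⟨_, hg₀g, rfl⟩) (subset_span ⟨g₀, hg₀, rfl⟩)
  · exact subset_span ⟨g, hg, rfl⟩

theorem exists_fin_mem_span_range_eq_top [FiniteDimensional k V] (F : G → V) {S : Set G}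
    (hspan : span k (F '' S) = ⊤) {r : ℕ} (hr : finrank k V = r) :
    ∃ σ : Fin r → G, (∀ i, σ i ∈ S) ∧ span k (Set.range (F ∘ σ)) = ⊤ := by
  obtain ⟨f, hf, hfspan, -⟩ := exists_fun_fin_finrank_span_eq k (F '' S)
  choose σ hσS hσ using hf
  have e : finrank k (span k (F '' S)) = r := by rw [hspan, finrank_top, hr]
  refine ⟨σ ∘ finCongr e.symm, fun i => hσS _, ?_⟩
  rw [← Function.comp_assoc, EquivLike.range_comp, show F ∘ σ = f from funext hσ, hfspan, hspan]

end SpanningFamilies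

theorem ZMod.exists_finset_eq_sum_of_dual {r : ℕ} (ℓ : Dual (ZMod 2) (Fin r → ZMod 2)) :
    ∃ s : Finset (Fin r), ∀ x, ℓ x = ∑ j ∈ s, x j := by
  refine ⟨Finset.univ.filter fun j => ℓ (Pi.single j 1) ≠ 0, fun x => ?_⟩
  rw [Finset.sum_filter, ℓ.pi_apply_eq_sum_univ x]
  refine Finset.sum_congr rfl fun j _ => ?_
  simp_rw [eq_comm (a := j), ← Pi.single_apply, smul_eq_mul]
  obtain h | h : ℓ (Pi.single j 1) = 0 ∨ ℓ (Pi.single j 1) = 1 := by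
    generalize ℓ (Pi.single j 1) = c
    revert c
    decide
  all_goals simp [h]

theorem span_eq_top_iff_forall_finset_sum_ne_zero {r : ℕ} {t : Set (Fin r → ZMod 2)} :
    span (ZMod 2) t = ⊤ ↔ ∀ s : Finset (Fin r), s.Nonempty → ∃ v ∈ t, ∑ j ∈ s, v j ≠ 0 := by
  rw [span_eq_top_iff_forall_dual]
  constructor
  · intro h s ⟨j₀, hj₀⟩
    refine (h (∑ j ∈ s, LinearMap.proj j) fun h0 => ?_).imp fun v hv => by simpa using hv
    simpa [Finset.sum_pi_single', hj₀] using LinearMap.congr_fun h0 (Pi.single j₀ 1)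
  · intro h ℓ hℓ
    obtain ⟨s, hs⟩ := ZMod.exists_finset_eq_sum_of_dual ℓ
    have hsne : s.Nonempty :=
      Finset.nonempty_iff_ne_empty.2 fun hs0 => hℓ (by ext x; simp [hs, hs0])
    obtain ⟨v, hv, hv0⟩ := h s hsne
    exact ⟨v, hv, by rwa [hs]⟩

theorem exists_fin_notMem_forall_finset_sum_ne_zero {G : Type*} [Group G] {r : ℕ}
    (F : G → Fin r → ZMod 2) (hF : ∀ g h, F (g * h) = F g + F h) {H : Subgroup G} (hH : H ≠ ⊤)
    (hsep : ∀ s : Finset (Fin r), s.Nonempty → ∃ g, ∑ j ∈ s, F g j ≠ 0) :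
    ∃ σ : Fin r → G, (∀ i, σ i ∉ H) ∧
      ∀ s : Finset (Fin r), s.Nonempty → ∃ i, ∑ j ∈ s, F (σ i) j ≠ 0 := by
  have hspan : span (ZMod 2) (Set.range F) = ⊤ :=
    span_eq_top_iff_forall_finset_sum_ne_zero.2 fun s hs => by simpa using hsep s hs
  rw [← span_image_compl_eq_span_range F hF hH] at hspan
  obtain ⟨σ, hσH, hσspan⟩ := exists_fin_mem_span_range_eq_top F hspan (finrank_fin_fun _)
  refine ⟨σ, hσH, fun s hs => ?_⟩
  obtain ⟨_, ⟨i, rfl⟩, hi⟩ := span_eq_top_iff_forall_finset_sum_ne_zero.1 hσspan s hs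
  exact ⟨i, hi⟩

section ComplIndicator

variable {M : Type*} [AddCommGroup M] (C : AddSubgroup M)

/-- Where `C` has index 2 in a subgroup `T`, this is the quotient map `T → T / C ≅ ZMod 2`. -/
noncomputable def complIndicator (P : M) : ZMod 2 := if P ∈ C then 0 else 1

variable {C}

theorem complIndicator_eq_zero_iff {P : M} : complIndicator C P = 0 ↔ P ∈ C := by
  unfold complIndicator
  split_ifs with h <;> simp [h]

theorem complIndicator_add {P P' : M} (h : P ∉ C → P' ∉ C → P + P' ∈ C) :
    complIndicator C (P + P') = complIndicator C P + complIndicator C P' := by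
  unfold complIndicator
  by_cases hP : P ∈ C <;> by_cases hP' : P' ∈ C
  · simp [hP, hP', C.add_mem hP hP']
  · simp [hP, hP', (C.add_mem_cancel_left hP).not.2 hP']
  · simp [hP, hP', (C.add_mem_cancel_right hP').not.2 hP]
  · simp only [hP, hP', h hP hP', if_true, if_false]
    decide

theorem complIndicator_eq_of_sub_mem {P P' : M} (h : P' - P ∈ C) :
    complIndicator C P' = complIndicator C P := by
  have hmem : P' ∈ C ↔ P ∈ C := by
    rw [← sub_add_cancel P' P]
    exact C.add_mem_cancel_left h
  simp only [complIndicator, hmem]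

theorem complIndicator_sum {ι : Type*} {T : AddSubgroup M}
    (hT : ∀ P ∈ T, ∀ P' ∈ T, P ∉ C → P' ∉ C → P + P' ∈ C) (s : Finset ι) {f : ι → M}
    (hf : ∀ i, f i ∈ T) :
    complIndicator C (∑ i ∈ s, f i) = ∑ i ∈ s, complIndicator C (f i) := by
  induction s using Finset.cons_induction with
  | empty => simp [complIndicator, C.zero_mem]
  | cons i s hi ih =>
    rw [Finset.sum_cons, Finset.sum_cons,
      complIndicator_add (hT _ (hf i) _ (sum_mem fun j _ => hf j)), ih]

end ComplIndicator

section QuadraticConjugates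

variable {K L : Type*} [Field K] [Field L] [Algebra K L] {a b : K} {α β : L}

theorem exists_algEquiv_apply_eq_of_quadratic [Normal K L]
    (hroot : ∀ x : K, x ^ 2 + a * x + b ≠ 0) (hsum : α + β = -algebraMap K L a)
    (hprod : α * β = algebraMap K L b) : ∃ σ : Gal(L/K), σ α = β := by
  set p : K[X] := X ^ 2 + C a * X + C b
  have hp : p.natDegree = 2 := by simp only [p]; compute_degree!
  have hirr : Irreducible p := irreducible_of_degree_le_three_of_not_isRoot (by simp [hp])
    fun x hx => hroot x (by simpa [p] using hx)
  have hmon : p.Monic := by simp only [p]; monicity!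
  have haeval : ∀ y : L, aeval y p = y ^ 2 + algebraMap K L a * y + algebraMap K L b := by
    simp [p]
  have hmin : p = minpoly K α := minpoly.eq_of_irreducible_of_monic hirr
    (by rw [haeval]; linear_combination α * hsum - hprod) hmon
  exact minpoly.exists_algEquiv_of_root' (Algebra.IsAlgebraic.isAlgebraic α)
    (by rw [← hmin, haeval]; linear_combination β * hsum - hprod)

theorem algEquiv_apply_eq_or_of_quadratic (σ : Gal(L/K)) (hsum : α + β = -algebraMap K L a)
    (hprod : α * β = algebraMap K L b) : σ α = α ∧ σ β = β ∨ σ α = β ∧ σ β = α := by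
  have hσsum : σ α + σ β = -algebraMap K L a := by
    rw [← map_add, hsum, map_neg, AlgEquiv.commutes]
  have hσprod : σ α * σ β = algebraMap K L b := by rw [← map_mul, hprod, AlgEquiv.commutes]
  have hroots : (σ α - α) * (σ α - β) = 0 := by
    linear_combination (-σ α) * hsum + hprod + σ α * hσsum - hσprod
  rcases mul_eq_zero.1 hroots with h | h <;> [left; right] <;> refine ⟨sub_eq_zero.1 h, ?_⟩ <;>
    linear_combination hσsum - hsum - h

end QuadraticConjugates

namespace WeierstrassCurve

theorem Δ_of_a₁_a₃_a₆_eq_zero {R : Type*} [CommRing R] (W : WeierstrassCurve R)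
    (h₁ : W.a₁ = 0) (h₃ : W.a₃ = 0) (h₆ : W.a₆ = 0) :
    W.Δ = 16 * W.a₄ ^ 2 * (W.a₂ ^ 2 - 4 * W.a₄) := by
  simp only [Δ, b₂, b₄, b₆, b₈, h₁, h₃, h₆]
  ring

section Field

variable {F : Type*} [Field F] {W : WeierstrassCurve F}

theorem two_ne_zero_of_Δ_ne_zero (h₁ : W.a₁ = 0) (h₃ : W.a₃ = 0) (h₆ : W.a₆ = 0)
    (hΔ : W.Δ ≠ 0) : (2 : F) ≠ 0 := fun h => hΔ (by
  rw [Δ_of_a₁_a₃_a₆_eq_zero W h₁ h₃ h₆]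
  linear_combination (8 * W.a₄ ^ 2 * (W.a₂ ^ 2 - 4 * W.a₄)) * h)

theorem exists_roots_of_Δ_ne_zero [IsAlgClosed F] (h₁ : W.a₁ = 0) (h₃ : W.a₃ = 0)
    (h₆ : W.a₆ = 0) (hΔ : W.Δ ≠ 0) : ∃ α β : F, α ≠ β ∧ α + β = -W.a₂ ∧ α * β = W.a₄ := by
  have hdeg : (X ^ 2 + C W.a₂ * X + C W.a₄ : F[X]).degree = 2 := by compute_degree!
  obtain ⟨α, hα⟩ := IsAlgClosed.exists_root _ (hdeg ▸ two_ne_zero)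
  simp only [IsRoot, eval_add, eval_pow, eval_mul, eval_C, eval_X] at hα
  refine ⟨α, -W.a₂ - α, fun h => hΔ ?_, by ring, by linear_combination -hα⟩
  rw [Δ_of_a₁_a₃_a₆_eq_zero W h₁ h₃ h₆]
  linear_combination (16 * W.a₄ ^ 2) * ((2 * α + W.a₂) * h - 4 * hα)

end Field

namespace Affine

variable {F : Type*} [Field F] {W : Affine F}

theorem equation_Y_zero_iff (h₁ : W.a₁ = 0) (h₃ : W.a₃ = 0) (h₆ : W.a₆ = 0) {x : F} :
    W.Equation x 0 ↔ x * (x ^ 2 + W.a₂ * x + W.a₄) = 0 := by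
  rw [equation_iff, h₁, h₃, h₆, eq_comm]
  ring_nf

namespace Point

theorem two_nsmul_some_eq_zero_iff {x y : F} (h : W.Nonsingular x y) :
    2 • some x y h = 0 ↔ y = W.negY x y := by
  rw [two_nsmul, add_eq_zero_iff_eq_neg, neg_some, some.injEq]
  simp

theorem two_nsmul_some_Y_zero (h₁ : W.a₁ = 0) (h₃ : W.a₃ = 0) {x : F}
    (h : W.Nonsingular x 0) : 2 • some x 0 h = 0 := by
  simp [two_nsmul_some_eq_zero_iff, negY, h₁, h₃]

theorem eq_zero_or_eq_some_of_two_nsmul_eq_zero (h₁ : W.a₁ = 0) (h₃ : W.a₃ = 0)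
    (h2 : (2 : F) ≠ 0) {P : W.Point} (hP : 2 • P = 0) :
    P = 0 ∨ ∃ x h, P = some x 0 h := by
  rcases P with _ | ⟨x, y, h⟩
  · exact Or.inl rfl
  · rw [two_nsmul_some_eq_zero_iff, negY, h₁, h₃] at hP
    obtain rfl : y = 0 := by
      have h2y : 2 * y = 0 := by linear_combination hP
      simpa [h2] using h2y
    exact Or.inr ⟨x, h, rfl⟩

theorem eq_of_two_nsmul_eq_zero (h₁ : W.a₁ = 0) (h₃ : W.a₃ = 0) (h₆ : W.a₆ = 0)
    (h2 : (2 : F) ≠ 0) {α β : F} (hsum : α + β = -W.a₂) (hprod : α * β = W.a₄)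
    (h₀ : W.Nonsingular 0 0) (hα : W.Nonsingular α 0) (hβ : W.Nonsingular β 0)
    {P : W.Point} (hP : 2 • P = 0) :
    P = 0 ∨ P = some 0 0 h₀ ∨ P = some α 0 hα ∨ P = some β 0 hβ := by
  obtain rfl | ⟨x, h, rfl⟩ := eq_zero_or_eq_some_of_two_nsmul_eq_zero h₁ h₃ h2 hP
  · exact Or.inl rfl
  have hx : x * ((x - α) * (x - β)) = 0 := by
    linear_combination (equation_Y_zero_iff h₁ h₃ h₆).1 h.1 - x ^ 2 * hsum + x * hprod
  rcases mul_eq_zero.1 hx with rfl | hx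
  · exact Or.inr (Or.inl rfl)
  rcases mul_eq_zero.1 hx with hx | hx
  · obtain rfl := sub_eq_zero.1 hx
    exact Or.inr (Or.inr (Or.inl rfl))
  · obtain rfl := sub_eq_zero.1 hx
    exact Or.inr (Or.inr (Or.inr rfl))

theorem some_add_some_of_Y_eq_zero (h₁ : W.a₁ = 0) (h₃ : W.a₃ = 0) {α β γ : F}
    (hαβ : α ≠ β) (hsum : α + β + γ = -W.a₂) (hα : W.Nonsingular α 0)
    (hβ : W.Nonsingular β 0) (hγ : W.Nonsingular γ 0) :
    some α 0 hα + some β 0 hβ = some γ 0 hγ := by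
  rw [add_of_X_ne hαβ, some.injEq]
  simp only [addX, slope_of_X_ne hαβ, sub_self, zero_div, ne_eq, OfNat.ofNat_ne_zero,
    not_false_eq_true, zero_pow, h₁, mul_zero, add_zero, zero_sub, addY, negY, negAddY, zero_mul,
    _root_.neg_zero, h₃, and_true]
  linear_combination -hsum

end Point

theorem quadratic_ne_zero_of_card_two_torsion_eq_two (h₁ : W.a₁ = 0) (h₃ : W.a₃ = 0)
    (h₆ : W.a₆ = 0) (hΔ : W.Δ ≠ 0) (hcard : Nat.card {P : W.Point // 2 • P = 0} = 2) (x : F) :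
    x ^ 2 + W.a₂ * x + W.a₄ ≠ 0 := by
  intro hx
  have ha₄ : W.a₄ ≠ 0 := fun h => hΔ (by rw [Δ_of_a₁_a₃_a₆_eq_zero W h₁ h₃ h₆, h]; ring)
  have hx0 : x ≠ 0 := by
    rintro rfl
    exact ha₄ (by simpa using hx)
  have hns : ∀ {z : F}, z * (z ^ 2 + W.a₂ * z + W.a₄) = 0 → W.Nonsingular z 0 := fun hz =>
    (equation_iff_nonsingular_of_Δ_ne_zero hΔ).1 ((equation_Y_zero_iff h₁ h₃ h₆).2 hz)
  let T (z : F) (hz : z * (z ^ 2 + W.a₂ * z + W.a₄) = 0) : {P : W.Point // 2 • P = 0} :=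
    ⟨_, Point.two_nsmul_some_Y_zero h₁ h₃ (hns hz)⟩
  have : Finite {P : W.Point // 2 • P = 0} := Nat.finite_of_card_ne_zero (by omega)
  have := Fintype.ofFinite {P : W.Point // 2 • P = 0}
  have h3 : ({⟨0, nsmul_zero 2⟩, T 0 (zero_mul _), T x (by rw [hx, mul_zero])} :
      Finset {P : W.Point // 2 • P = 0}).card = 3 :=
    Finset.card_eq_three.2 ⟨_, _, _, by simp [T], by simp [T], by simp [T, hx0.symm], rfl⟩
  have hle := h3 ▸ Finset.card_le_univ _
  rw [Fintype.card_eq_nat_card, hcard] at hle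
  omega

end Affine

end WeierstrassCurve

section Galois

variable {K : Type*} [Field K] (E : WeierstrassCurve K)

theorem galAct_some_eq (σ : Gal(AlgebraicClosure K/K)) {x y x' y' : AlgebraicClosure K}
    (h : (E⁄(AlgebraicClosure K)).Nonsingular x y)
    (h' : (E⁄(AlgebraicClosure K)).Nonsingular x' y') (hx : σ x = x') (hy : σ y = y') :
    galAct E σ (.some x y h) = .some x' y' h' := by
  subst hx hy
  rfl

theorem galAct_one (P : (E⁄(AlgebraicClosure K)).Point) : galAct E 1 P = P := by
  cases P <;> rfl

theorem galAct_mul (σ τ : Gal(AlgebraicClosure K/K)) (P : (E⁄(AlgebraicClosure K)).Point) :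
    galAct E (σ * τ) P = galAct E σ (galAct E τ P) := by
  cases P <;> rfl

def twoTorsionFixingSubgroup : Subgroup Gal(AlgebraicClosure K/K) where
  carrier := {σ | ∀ P, 2 • P = 0 → galAct E σ P = P}
  one_mem' _ _ := galAct_one E _
  mul_mem' hσ hτ P hP := by rw [galAct_mul, hτ P hP, hσ P hP]
  inv_mem' {σ} hσ P hP := by
    conv_lhs => rw [← hσ P hP, ← galAct_mul, inv_mul_cancel, galAct_one]

def rationalTwoTorsion : AddSubgroup (E⁄(AlgebraicClosure K)).Point where
  carrier := {P | MemC E P}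
  zero_mem' := ⟨nsmul_zero 2, fun σ => map_zero _⟩
  add_mem' hP hQ :=
    ⟨by rw [nsmul_add, hP.1, hQ.1, add_zero], fun σ => by rw [map_add, hP.2, hQ.2]⟩
  neg_mem' hP := ⟨by rw [neg_nsmul, hP.1, neg_zero], fun σ => by rw [map_neg, hP.2]⟩

structure IsConjugateTwoTorsionPair (Q R : (E⁄(AlgebraicClosure K)).Point) : Prop where
  two_nsmul_left : 2 • Q = 0
  two_nsmul_right : 2 • R = 0
  eq_of_two_nsmul_eq_zero : ∀ P, 2 • P = 0 → P = 0 ∨ P = Q + R ∨ P = Q ∨ P = R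
  galAct_eq : ∀ σ, galAct E σ Q = Q ∧ galAct E σ R = R ∨ galAct E σ Q = R ∧ galAct E σ R = Q

namespace IsConjugateTwoTorsionPair

variable {E} {Q R : (E⁄(AlgebraicClosure K)).Point}

theorem memC_add (h : IsConjugateTwoTorsionPair E Q R) : MemC E (Q + R) := by
  refine ⟨by rw [nsmul_add, h.two_nsmul_left, h.two_nsmul_right, add_zero], fun σ => ?_⟩
  rcases h.galAct_eq σ with ⟨hQ, hR⟩ | ⟨hQ, hR⟩ <;> rw [map_add, hQ, hR]
  exact add_comm R Q

theorem eq_or_eq_of_not_memC (h : IsConjugateTwoTorsionPair E Q R)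
    {P : (E⁄(AlgebraicClosure K)).Point} (hP : 2 • P = 0) (hC : ¬MemC E P) : P = Q ∨ P = R := by
  rcases h.eq_of_two_nsmul_eq_zero P hP with rfl | rfl | hPQR
  · exact absurd (rationalTwoTorsion E).zero_mem hC
  · exact absurd h.memC_add hC
  · exact hPQR

theorem memC_add_of_not_memC (h : IsConjugateTwoTorsionPair E Q R)
    {P P' : (E⁄(AlgebraicClosure K)).Point} (hP : 2 • P = 0) (hP' : 2 • P' = 0)
    (hC : ¬MemC E P) (hC' : ¬MemC E P') : MemC E (P + P') := by
  have hQQ : Q + Q = 0 := by rw [← two_nsmul, h.two_nsmul_left]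
  have hRR : R + R = 0 := by rw [← two_nsmul, h.two_nsmul_right]
  have hC0 : MemC E 0 := (rationalTwoTorsion E).zero_mem
  rcases h.eq_or_eq_of_not_memC hP hC with rfl | rfl <;>
    rcases h.eq_or_eq_of_not_memC hP' hC' with rfl | rfl
  · rwa [hQQ]
  · exact h.memC_add
  · rw [add_comm]
    exact h.memC_add
  · rwa [hRR]

theorem memC_galAct_sub (h : IsConjugateTwoTorsionPair E Q R) (σ : Gal(AlgebraicClosure K/K))
    {P : (E⁄(AlgebraicClosure K)).Point} (hP : 2 • P = 0) : MemC E (galAct E σ P - P) := by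
  have hQ : -Q = Q := neg_eq_of_add_eq_zero_left (by rw [← two_nsmul, h.two_nsmul_left])
  have hR : -R = R := neg_eq_of_add_eq_zero_left (by rw [← two_nsmul, h.two_nsmul_right])
  have hfix : ∀ {P}, galAct E σ P = P → MemC E (galAct E σ P - P) := fun hσ => by
    rw [hσ, sub_self]
    exact (rationalTwoTorsion E).zero_mem
  rcases h.eq_of_two_nsmul_eq_zero P hP with rfl | rfl | rfl | rfl
  · exact hfix (map_zero _)
  · exact hfix (h.memC_add.2 σ)
  · rcases h.galAct_eq σ with ⟨hσ, -⟩ | ⟨hσ, -⟩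
    · exact hfix hσ
    · rw [hσ, sub_eq_add_neg, hQ, add_comm]
      exact h.memC_add
  · rcases h.galAct_eq σ with ⟨-, hσ⟩ | ⟨-, hσ⟩
    · exact hfix hσ
    · rw [hσ, sub_eq_add_neg, hR]
      exact h.memC_add

theorem complIndicator_cocycle_mul (h : IsConjugateTwoTorsionPair E Q R)
    {c : Gal(AlgebraicClosure K/K) → (E⁄(AlgebraicClosure K)).Point} (hc2 : ∀ σ, 2 • c σ = 0)
    (hc : ∀ σ τ, c (σ * τ) = c σ + galAct E σ (c τ)) (σ τ : Gal(AlgebraicClosure K/K)) :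
    complIndicator (rationalTwoTorsion E) (c (σ * τ)) =
      complIndicator (rationalTwoTorsion E) (c σ) +
        complIndicator (rationalTwoTorsion E) (c τ) := by
  have hστ : 2 • galAct E σ (c τ) = 0 := by rw [← map_nsmul, hc2, map_zero]
  rw [hc, complIndicator_add (h.memC_add_of_not_memC (hc2 σ) hστ),
    complIndicator_eq_of_sub_mem (P' := galAct E σ (c τ)) (h.memC_galAct_sub σ (hc2 τ))]

theorem complIndicator_sum (h : IsConjugateTwoTorsionPair E Q R) {ι : Type*} (s : Finset ι)
    {f : ι → (E⁄(AlgebraicClosure K)).Point} (hf : ∀ i, 2 • f i = 0) :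
    complIndicator (rationalTwoTorsion E) (∑ i ∈ s, f i) =
      ∑ i ∈ s, complIndicator (rationalTwoTorsion E) (f i) :=
  _root_.complIndicator_sum (T := AddSubgroup.torsionBy _ 2)
    (fun _ hP _ hP' => h.memC_add_of_not_memC (AddSubgroup.torsionBy.nsmul_iff.1 hP)
      (AddSubgroup.torsionBy.nsmul_iff.1 hP'))
    s fun i => AddSubgroup.torsionBy.nsmul_iff.2 (hf i)

end IsConjugateTwoTorsionPair

variable {E}

theorem exists_isConjugateTwoTorsionPair (h₁ : E.a₁ = 0) (h₃ : E.a₃ = 0) (h₆ : E.a₆ = 0)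
    (hΔ : E.Δ ≠ 0) (hcard : Nat.card {P : E.toAffine.Point // 2 • P = 0} = 2) :
    ∃ Q R, IsConjugateTwoTorsionPair E Q R ∧ ∃ σ, galAct E σ Q ≠ Q := by
  set W := E⁄(AlgebraicClosure K)
  have h₁' : W.a₁ = 0 := by simp [W, h₁]
  have h₃' : W.a₃ = 0 := by simp [W, h₃]
  have h₆' : W.a₆ = 0 := by simp [W, h₆]
  have hΔ' : W.Δ ≠ 0 := (E.map_Δ _).trans_ne ((_root_.map_ne_zero _).2 hΔ)
  obtain ⟨α, β, hαβ, hsum, hprod⟩ := exists_roots_of_Δ_ne_zero h₁' h₃' h₆' hΔ'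
  have hns : ∀ {z}, z * (z ^ 2 + W.a₂ * z + W.a₄) = 0 → W.Nonsingular z 0 := fun hz =>
    (equation_iff_nonsingular_of_Δ_ne_zero hΔ').1 ((equation_Y_zero_iff h₁' h₃' h₆').2 hz)
  have h₀ : W.Nonsingular 0 0 := hns (zero_mul _)
  have hQ : W.Nonsingular α 0 := hns (by linear_combination α * (α * hsum - hprod))
  have hR : W.Nonsingular β 0 := hns (by linear_combination β * (β * hsum - hprod))
  have hQR : Point.some α 0 hQ + Point.some β 0 hR = Point.some 0 0 h₀ :=
    Point.some_add_some_of_Y_eq_zero h₁' h₃' hαβ (by rw [add_zero, hsum]) hQ hR h₀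
  refine ⟨_, _, ⟨Point.two_nsmul_some_Y_zero h₁' h₃' hQ, Point.two_nsmul_some_Y_zero h₁' h₃' hR,
    fun P hP => ?_, fun σ => ?_⟩, ?_⟩
  · rw [hQR]
    exact Point.eq_of_two_nsmul_eq_zero h₁' h₃' h₆' (two_ne_zero_of_Δ_ne_zero h₁' h₃' h₆' hΔ')
      hsum hprod h₀ hQ hR hP
  · rcases algEquiv_apply_eq_or_of_quadratic (K := K) σ hsum hprod with ⟨hα', hβ'⟩ | ⟨hα', hβ'⟩
      <;> [left; right] <;>
      exact ⟨galAct_some_eq E σ _ _ hα' (map_zero σ), galAct_some_eq E σ _ _ hβ' (map_zero σ)⟩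
  · obtain ⟨σ, hσ⟩ := exists_algEquiv_apply_eq_of_quadratic
      (quadratic_ne_zero_of_card_two_torsion_eq_two h₁ h₃ h₆ hΔ hcard) hsum hprod
    refine ⟨σ, fun h => hαβ ?_⟩
    rw [galAct_some_eq E σ _ hR hσ (map_zero σ), Point.some.injEq] at h
    exact h.1.symm

end Galois

theorem stmt5_general (K : Type*) [Field K] (A B : K)
    (E : WeierstrassCurve K) (hE : E = ⟨0, A, 0, B, 0⟩) (hell : E.Δ ≠ 0)
    -- `E(K)[2] ≅ ℤ/2ℤ`:
    (htors : Nat.card {P : E.toAffine.Point // 2 • P = 0} = 2)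
    (r : ℕ) (v : Fin r → ((AlgebraicClosure K ≃ₐ[K] AlgebraicClosure K) → (E⁄(AlgebraicClosure K)).Point))
    -- the `v i` are 1-cocycles valued in `E[2]`:
    (hval : ∀ i σ, 2 • v i σ = 0)
    (hcocycle : ∀ i σ τ, v i (σ * τ) = v i σ + galAct E σ (v i τ))
    -- the classes of the `v i` span an `r`-dimensional subspace `V` with `V ∩ S = 0`:
    (hindep : ∀ s : Finset (Fin r),
      (∃ (c' : (AlgebraicClosure K ≃ₐ[K] AlgebraicClosure K) → (E⁄(AlgebraicClosure K)).Point)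
        (P : (E⁄(AlgebraicClosure K)).Point), (∀ σ, MemC E (c' σ)) ∧ 2 • P = 0 ∧
          ∀ σ, ∑ j ∈ s, v j σ = c' σ + (galAct E σ P - P)) → s = ∅) :
    ∃ σs : Fin r → (AlgebraicClosure K ≃ₐ[K] AlgebraicClosure K),
      -- each `σᵢ` acts nontrivially on `E[2]` (i.e. `σᵢ|_M ≠ 1` for `M = K(E[2])`):
      (∀ i, ∃ T : (E⁄(AlgebraicClosure K)).Point, 2 • T = 0 ∧ galAct E (σs i) T ≠ T) ∧
      -- well-definedness: coboundaries of 2-torsion points evaluate into `C`: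
      (∀ P : (E⁄(AlgebraicClosure K)).Point, 2 • P = 0 → ∀ i, MemC E (galAct E (σs i) P - P)) ∧
      -- injectivity on `V` of `c ↦ (c(σ₁), ..., c(σᵣ)) mod C`:
      (∀ s : Finset (Fin r), s.Nonempty → ∃ i, ¬MemC E (∑ j ∈ s, v j (σs i))) := by
  obtain ⟨Q, R, hQR, σ₀, hσ₀⟩ :=
    exists_isConjugateTwoTorsionPair (by rw [hE]) (by rw [hE]) (by rw [hE]) hell htors
  set χ := complIndicator (rationalTwoTorsion E)
  have hχ : ∀ s σ, χ (∑ j ∈ s, v j σ) = ∑ j ∈ s, χ (v j σ) := fun s σ =>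
    hQR.complIndicator_sum s fun j => hval j σ
  have hH : twoTorsionFixingSubgroup E ≠ ⊤ := fun h =>
    hσ₀ ((h ▸ Subgroup.mem_top σ₀ : σ₀ ∈ twoTorsionFixingSubgroup E) Q hQR.two_nsmul_left)
  have hsep : ∀ s : Finset (Fin r), s.Nonempty → ∃ σ, ∑ j ∈ s, χ (v j σ) ≠ 0 := by
    intro s hs
    by_contra! h0
    refine hs.ne_empty (hindep s ⟨fun σ => ∑ j ∈ s, v j σ, 0, fun σ => ?_, nsmul_zero 2,
      fun σ => by rw [map_zero, sub_zero, add_zero]⟩)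
    exact complIndicator_eq_zero_iff.1 ((hχ s σ).trans (h0 σ))
  obtain ⟨σs, hσsH, hσs⟩ := exists_fin_notMem_forall_finset_sum_ne_zero (fun σ j => χ (v j σ))
    (fun σ τ => funext fun j => hQR.complIndicator_cocycle_mul (hval j) (hcocycle j) σ τ) hH hsep
  refine ⟨σs, fun i => ?_, fun P hP i => hQR.memC_galAct_sub (σs i) hP, fun s hs => ?_⟩
  · simpa [twoTorsionFixingSubgroup] using hσsH i
  · obtain ⟨i, hi⟩ := hσs s hs
    exact ⟨i, fun hC => hi ((hχ s (σs i)).symm.trans (complIndicator_eq_zero_iff.2 hC))⟩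

/-- Let `K` be a field of characteristic 0, `E/K` an elliptic curve with
`E(K)[2] ≅ ℤ/2ℤ = C`, and let `S` denote the image of `H¹(K, C)` in `H¹(K, E[2])` (the
classes representable by cocycles valued in `C`).  Let `V ⊆ H¹(K, E[2])` be an
`r`-dimensional `𝔽₂`-subspace with `V ∩ S = 0`; here `V` is given by cocycle representatives
`v 0, ..., v (r-1)` of a basis, the condition `V ∩ S = 0` (together with `dim V = r`) being
the hypothesis `hindep`: no nonzero `𝔽₂`-combination of the `v i` is a cocycle valued in `C`
plus a coboundary.  Then there exist `σ₁, ..., σᵣ ∈ G_K`, each acting nontrivially on `E[2]`,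
such that the map `V → ⊕ᵢ E[2]/C`, sending the class of a cocycle `c` to
`(c(σ₁), ..., c(σᵣ)) mod C`, is well-defined (coboundaries evaluate into `C`) and injective
(every nonzero combination has some evaluation outside `C`). -/
theorem stmt5 (K : Type*) [Field K] [CharZero K] (A B : K)
    (E : WeierstrassCurve K) (hE : E = ⟨0, A, 0, B, 0⟩) (hell : E.Δ ≠ 0)
    -- `E(K)[2] ≅ ℤ/2ℤ`:
    (htors : Nat.card {P : E.toAffine.Point // 2 • P = 0} = 2)
    (r : ℕ) (v : Fin r → ((AlgebraicClosure K ≃ₐ[K] AlgebraicClosure K) → (E⁄(AlgebraicClosure K)).Point))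
    -- the `v i` are 1-cocycles valued in `E[2]`:
    (hval : ∀ i σ, 2 • v i σ = 0)
    (hcocycle : ∀ i σ τ, v i (σ * τ) = v i σ + galAct E σ (v i τ))
    -- the classes of the `v i` span an `r`-dimensional subspace `V` with `V ∩ S = 0`:
    (hindep : ∀ s : Finset (Fin r),
      (∃ (c' : (AlgebraicClosure K ≃ₐ[K] AlgebraicClosure K) → (E⁄(AlgebraicClosure K)).Point)
        (P : (E⁄(AlgebraicClosure K)).Point), (∀ σ, MemC E (c' σ)) ∧ 2 • P = 0 ∧
          ∀ σ, ∑ j ∈ s, v j σ = c' σ + (galAct E σ P - P)) → s = ∅) :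
    ∃ σs : Fin r → (AlgebraicClosure K ≃ₐ[K] AlgebraicClosure K),
      -- each `σᵢ` acts nontrivially on `E[2]` (i.e. `σᵢ|_M ≠ 1` for `M = K(E[2])`):
      (∀ i, ∃ T : (E⁄(AlgebraicClosure K)).Point, 2 • T = 0 ∧ galAct E (σs i) T ≠ T) ∧
      -- well-definedness: coboundaries of 2-torsion points evaluate into `C`:
      (∀ P : (E⁄(AlgebraicClosure K)).Point, 2 • P = 0 → ∀ i, MemC E (galAct E (σs i) P - P)) ∧
      -- injectivity on `V` of `c ↦ (c(σ₁), ..., c(σᵣ)) mod C`: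
      (∀ s : Finset (Fin r), s.Nonempty → ∃ i, ¬MemC E (∑ j ∈ s, v j (σs i))) :=
  stmt5_general K A B E hE hell htors r v hval hcocycle hindep
end

section
/- Let E be an elliptic curve over a number field K and F/K a quadratic extension such that d_2(E^F/K) = r. Then for all X > 0, N_r(E, X) ≥ N_r(E^F, X / N_{K/Q} f(F/K)), where N_r(E,X) counts quadratic extensions L/K of norm-conductor less than X with d_2(E^L/K) = r. -/
/-- The group of square classes `Kˣ/(Kˣ)²` of a field `K`; its nontrivial elements
correspond to the quadratic extensions `L = K(√d)` of `K`. -/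
abbrev SqClasses (K : Type*) [Field K] :=
  Kˣ ⧸ (powMonoidHom 2 : Kˣ →* Kˣ).range

lemma SqClasses.mul_self {K : Type*} [Field K] (l : SqClasses K) : l * l = 1 := by
  induction l using QuotientGroup.induction_on with
  | H u =>
    rw [← QuotientGroup.mk_mul, QuotientGroup.eq_one_iff]
    exact ⟨u, by simp [powMonoidHom, sq]⟩

lemma SqClasses.cancel {K : Type*} [Field K] (f l : SqClasses K) : f * (f * l) = l := by
  rw [← mul_assoc, SqClasses.mul_self]
  exact one_mul l

/-- Let `E` be an elliptic curve over a number field `K` and `F/K` a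
quadratic extension with `d₂(E^F/K) = r`.  Then for all `X > 0`,
`N_r(E, X) ≥ N_r(E^F, X / N_{K/ℚ} 𝔣(F/K))`, where `N_r(E, X)` counts the quadratic
extensions `L/K` with `N_{K/ℚ} 𝔣(L/K) < X` and `d₂(E^L/K) = r`.

Quadratic extensions `L/K` are identified with nontrivial square classes `l ∈ Kˣ/(Kˣ)²`
(so that the twist `(E^F)^{L'}` is `E^L` for `l = f·l'`); the data of the norm of the finite
conductor (`cond`) and of the 2-Selmer rank of the corresponding quadratic twist (`d2`) enter
through the parameters below, constrained by: positivity of the conductor norm, the key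
divisibility `𝔣(L·L'/K) ∣ 𝔣(L/K)·𝔣(L'/K)`, and the finiteness of the number of quadratic
extensions of bounded conductor. -/
theorem stmt16 (K : Type*) [Field K] [NumberField K]
    (E : WeierstrassCurve K) (hell : E.Δ ≠ 0)
    -- `cond l = N_{K/ℚ} 𝔣(L/K)`, the norm of the finite part of the conductor of `L/K`
    (cond : SqClasses K → ℕ)
    -- `d2 l = d₂(E^L/K)`, the 2-Selmer rank of the quadratic twist of `E` by `L/K`
    (d2 : SqClasses K → ℕ)
    (hpos : ∀ l, 0 < cond l)
    (hcondmul : ∀ l l' : SqClasses K, cond (l * l') ∣ cond l * cond l')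
    (hfin : ∀ X : ℝ, {l : SqClasses K | (cond l : ℝ) < X}.Finite)
    (r : ℕ) (f : SqClasses K) (hf : f ≠ 1) (hd2f : d2 f = r)
    (X : ℝ) (hX : 0 < X) :
    -- `N_r(E^F, X / N_{K/ℚ}𝔣(F/K)) ≤ N_r(E, X)`:
    {l' : SqClasses K | l' ≠ 1 ∧ (cond l' : ℝ) < X / cond f ∧ d2 (f * l') = r}.ncard ≤
      {l : SqClasses K | l ≠ 1 ∧ (cond l : ℝ) < X ∧ d2 l = r}.ncard := by
  classical
  have hcfpos : (0:ℝ) < cond f := by exact_mod_cast hpos f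
  have h1 : ∀ l : SqClasses K, (1:ℝ) ≤ cond l := fun l => by exact_mod_cast hpos l
  set g : SqClasses K → SqClasses K := fun l' => if l' = f then f else f * l' with hg
  have hmaps : Set.MapsTo g {l' : SqClasses K | l' ≠ 1 ∧ (cond l' : ℝ) < X / cond f ∧ d2 (f * l') = r}
      {l : SqClasses K | l ≠ 1 ∧ (cond l : ℝ) < X ∧ d2 l = r} := by
    rintro l' ⟨hne, hlt, hd2⟩
    by_cases h : l' = f
    · simp only [hg, if_pos h, Set.mem_setOf_eq]
      refine ⟨hf, ?_, hd2f⟩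
      calc (cond f : ℝ) < X / cond f := h ▸ hlt
        _ ≤ X := by rw [div_le_iff₀ hcfpos]; nlinarith [h1 f]
    · simp only [hg, if_neg h, Set.mem_setOf_eq]
      refine ⟨?_, ?_, hd2⟩
      · intro habs
        have h3 := SqClasses.cancel f l'
        rw [habs] at h3
        exact h (h3.symm.trans (mul_one f))
      · have : (cond (f * l') : ℝ) ≤ (cond f : ℝ) * cond l' := by
          exact_mod_cast Nat.le_of_dvd (Nat.mul_pos (hpos f) (hpos l')) (hcondmul f l')
        calc (cond (f * l') : ℝ) ≤ cond f * cond l' := this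
          _ < cond f * (X / cond f) := mul_lt_mul_of_pos_left hlt hcfpos
          _ = X := by field_simp
  have hinj : Set.InjOn g {l' : SqClasses K | l' ≠ 1 ∧ (cond l' : ℝ) < X / cond f ∧ d2 (f * l') = r} := by
    rintro a ⟨ha, -, -⟩ b ⟨hb, -, -⟩ hab
    by_cases h1 : a = f <;> by_cases h2 : b = f
    · rw [h1, h2]
    · simp only [hg, if_pos h1, if_neg h2] at hab
      have : f * f = f * (f * b) := congrArg (f * ·) hab
      rw [SqClasses.mul_self, SqClasses.cancel] at this
      exact absurd this.symm hb
    · simp only [hg, if_pos h2, if_neg h1] at hab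
      have : f * (f * a) = f * f := congrArg (f * ·) hab
      rw [SqClasses.mul_self, SqClasses.cancel] at this
      exact absurd this ha
    · simp only [hg, if_neg h1, if_neg h2] at hab
      have : f * (f * a) = f * (f * b) := congrArg (f * ·) hab
      rwa [SqClasses.cancel, SqClasses.cancel] at this
  exact Set.ncard_le_ncard_of_injOn g hmaps hinj ((hfin X).subset (fun l hl => hl.2.1))
end
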